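/- Let α ∈ (0,1], ν ≥ 0, and K : ℕ → ℝ with c₁ ℓ^{-ν} ≤ |K(ℓ)| ≤ c₂ ℓ^{-ν} for all ℓ ≥ 1 (c₁, c₂ > 0). For ε ∈ (0, e^{-1}) define M_d(ε) = min{ ℓ ≥ 1 : |K(ℓ)| ≤ ℓ^{α/2} ε^α (log(1/ε²))^{2/3} }. Then there exists ε₀ > 0, depending only on c₁, c₂, ν, α, such that for all ε ∈ (0, ε₀) and for every function Y : ℕ → ℝ satisfying |Y(ℓ) - K(ℓ)| ≤ |K(ℓ)|/2 for all 1 ≤ ℓ ≤ M_d(ε), the stopping frequency M(ε) = min{ ℓ ≥ 1 : |Y(ℓ)| ≤ ℓ^{α/2} ε^α log(1/ε²) } satisfies M(ε) ≤ M_d(ε). -/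

import Mathlib

/-!
Since `|K ℓ| ≲ ℓ^{-ν}` while the threshold `ℓ^{α/2} θ_d(ε)` grows, `M_d(ε)` is attained. At
`ℓ = M_d(ε)` the hypothesis gives `|Y ℓ| ≤ (3/2) |K ℓ| ≤ (3/2) ℓ^{α/2} ε^α L^{2/3}` with
`L = log(1/ε²)`, and once `L ≥ 27/8` (i.e. `L^{1/3} ≥ 3/2`; `ε < e^{-2}` gives `L > 4`) this is at most `ℓ^{α/2} ε^α L`,
so `M_d(ε)` already satisfies the empirical stopping condition.
-/

/-- The Fourier-domain stopping frequency `min{ ℓ ≥ 1 : |K(ℓ)| ≤ thr ℓ }`. -/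
noncomputable def stopFreq (K : ℕ → ℝ) (thr : ℕ → ℝ) : ℕ :=
  sInf {ℓ : ℕ | 1 ≤ ℓ ∧ |K ℓ| ≤ thr ℓ}

/-- The threshold `θ_d(ε) = ε^α (log(1/ε²))^{2/3}`. -/
noncomputable def thetaD (α ε : ℝ) : ℝ := ε ^ α * (Real.log (1 / ε ^ 2)) ^ ((2 : ℝ) / 3)

/-- The upper reference frequency `M_d(ε) = min{ ℓ ≥ 1 : |K(ℓ)| ≤ ℓ^{α/2} θ_d(ε) }`. -/
noncomputable def Md (K : ℕ → ℝ) (α ε : ℝ) : ℕ :=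
  stopFreq K (fun ℓ => (ℓ : ℝ) ^ (α / 2) * thetaD α ε)

/-- The empirical stopping frequency `M(ε) = min{ ℓ ≥ 1 : |Y(ℓ)| ≤ ℓ^{α/2} ε^α log(1/ε²) }`. -/
noncomputable def Mstop (Y : ℕ → ℝ) (α ε : ℝ) : ℕ :=
  stopFreq Y (fun ℓ => (ℓ : ℝ) ^ (α / 2) * (ε ^ α * Real.log (1 / ε ^ 2)))

open Filter

section StopFreq

variable {K : ℕ → ℝ} {thr : ℕ → ℝ} {ℓ : ℕ}

theorem stopFreq_spec (h : ∃ ℓ, 1 ≤ ℓ ∧ |K ℓ| ≤ thr ℓ) :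
    1 ≤ stopFreq K thr ∧ |K (stopFreq K thr)| ≤ thr (stopFreq K thr) :=
  Nat.sInf_mem h

theorem stopFreq_le (hℓ : 1 ≤ ℓ) (hK : |K ℓ| ≤ thr ℓ) : stopFreq K thr ≤ ℓ :=
  Nat.sInf_le ⟨hℓ, hK⟩

end StopFreq

theorem exists_abs_le_rpow_mul_of_abs_le_rpow_neg {K : ℕ → ℝ} {β ν c θ : ℝ}
    (hβν : 0 < β + ν) (hθ : 0 < θ) (hK : ∀ ℓ : ℕ, 1 ≤ ℓ → |K ℓ| ≤ c * (ℓ : ℝ) ^ (-ν)) :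
    ∃ ℓ : ℕ, 1 ≤ ℓ ∧ |K ℓ| ≤ (ℓ : ℝ) ^ β * θ := by
  have hgrowth : Tendsto (fun ℓ : ℕ => (ℓ : ℝ) ^ (β + ν)) atTop atTop :=
    (tendsto_rpow_atTop hβν).comp tendsto_natCast_atTop_atTop
  obtain ⟨ℓ, hℓ1, hℓ⟩ :=
    ((eventually_ge_atTop 1).and (hgrowth.eventually_ge_atTop (c / θ))).exists
  refine ⟨ℓ, hℓ1, (hK ℓ hℓ1).trans ?_⟩
  have hℓpos : (0 : ℝ) < ℓ := by exact_mod_cast hℓ1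
  have hsplit : (ℓ : ℝ) ^ β = (ℓ : ℝ) ^ (β + ν) * (ℓ : ℝ) ^ (-ν) := by
    rw [← Real.rpow_add hℓpos, add_neg_cancel_right]
  rw [hsplit, mul_right_comm]
  gcongr
  exact (div_le_iff₀ hθ).1 hℓ

theorem mul_rpow_two_thirds_le {c L : ℝ} (hc : 0 ≤ c) (hL : 0 ≤ L) (hcL : c ^ 3 ≤ L) :
    c * L ^ ((2 : ℝ) / 3) ≤ L := by
  set x := L ^ ((1 : ℝ) / 3) with hx
  have hx0 : 0 ≤ x := Real.rpow_nonneg hL _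
  have hpow (n : ℕ) : x ^ n = L ^ ((n : ℝ) / 3) := by
    rw [hx, ← Real.rpow_natCast, ← Real.rpow_mul hL]
    ring_nf
  have hx3 : x ^ 3 = L := by rw [hpow]; norm_num
  have hx2 : x ^ 2 = L ^ ((2 : ℝ) / 3) := by rw [hpow]; norm_num
  have hcx : c ≤ x := (pow_le_pow_iff_left₀ hc hx0 (by norm_num)).1 (hx3 ▸ hcL)
  rw [← hx2, ← hx3]
  nlinarith [sq_nonneg x]

theorem four_lt_log_one_div_sq {ε : ℝ} (hε : 0 < ε) (hε2 : ε < Real.exp (-2)) :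
    4 < Real.log (1 / ε ^ 2) := by
  have hlog : Real.log ε < -2 := by simpa using Real.log_lt_log hε hε2
  rw [one_div, Real.log_inv, Real.log_pow]
  push_cast
  linarith

theorem thetaD_pos {α ε : ℝ} (hε : 0 < ε) (hε2 : ε < Real.exp (-2)) : 0 < thetaD α ε :=
  mul_pos (Real.rpow_pos_of_pos hε α)
    (Real.rpow_pos_of_pos (by linarith [four_lt_log_one_div_sq hε hε2]) _)

theorem three_halves_mul_thetaD_le {α ε : ℝ} (hε : 0 < ε) (hε2 : ε < Real.exp (-2)) :
    3 / 2 * thetaD α ε ≤ ε ^ α * Real.log (1 / ε ^ 2) := by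
  have hL := four_lt_log_one_div_sq hε hε2
  rw [thetaD, mul_left_comm]
  gcongr
  exact mul_rpow_two_thirds_le (by norm_num) (by linarith) (by linarith)

theorem M_le_Md_general (α ν c₁ c₂ : ℝ) (hα : 0 < α) (hν : 0 ≤ ν)
    (K : ℕ → ℝ)
    (hK : ∀ ℓ : ℕ, 1 ≤ ℓ →
      c₁ * (ℓ : ℝ) ^ (-ν) ≤ |K ℓ| ∧ |K ℓ| ≤ c₂ * (ℓ : ℝ) ^ (-ν)) :
    ∃ ε₀ : ℝ, 0 < ε₀ ∧ ε₀ ≤ Real.exp (-1) ∧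
      ∀ ε : ℝ, 0 < ε → ε < ε₀ →
        ∀ Y : ℕ → ℝ, (∀ ℓ : ℕ, 1 ≤ ℓ → ℓ ≤ Md K α ε → |Y ℓ - K ℓ| ≤ |K ℓ| / 2) →
          Mstop Y α ε ≤ Md K α ε := by
  refine ⟨Real.exp (-2), Real.exp_pos _, Real.exp_le_exp.2 (by norm_num), ?_⟩
  intro ε hε hε2 Y hY
  set m := Md K α ε
  obtain ⟨hm1, hKm⟩ : 1 ≤ m ∧ |K m| ≤ (m : ℝ) ^ (α / 2) * thetaD α ε :=
    stopFreq_spec (exists_abs_le_rpow_mul_of_abs_le_rpow_neg (by linarith)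
      (thetaD_pos hε hε2) fun ℓ hℓ => (hK ℓ hℓ).2)
  have hYm : |Y m| ≤ 3 / 2 * |K m| := by
    linarith [abs_sub_abs_le_abs_sub (Y m) (K m), hY m hm1 le_rfl]
  refine stopFreq_le hm1 (hYm.trans ?_)
  calc 3 / 2 * |K m| ≤ 3 / 2 * ((m : ℝ) ^ (α / 2) * thetaD α ε) := by gcongr
    _ = (m : ℝ) ^ (α / 2) * (3 / 2 * thetaD α ε) := by ring
    _ ≤ (m : ℝ) ^ (α / 2) * (ε ^ α * Real.log (1 / ε ^ 2)) :=
      mul_le_mul_of_nonneg_left (three_halves_mul_thetaD_le hε hε2) (by positivity)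

/-- Deterministic core of `{M > M_d}` being negligible: if the observed Fourier
coefficients `Y` are within `|K(ℓ)|/2` of `K(ℓ)` for all `ℓ ≤ M_d(ε)`, then for all
sufficiently small `ε` the empirical stopping rule satisfies `M(ε) ≤ M_d(ε)`. -/
theorem M_le_Md (α ν c₁ c₂ : ℝ) (hα : 0 < α) (hα1 : α ≤ 1) (hν : 0 ≤ ν)
    (hc₁ : 0 < c₁) (hc₂ : 0 < c₂) (K : ℕ → ℝ)
    (hK : ∀ ℓ : ℕ, 1 ≤ ℓ →
      c₁ * (ℓ : ℝ) ^ (-ν) ≤ |K ℓ| ∧ |K ℓ| ≤ c₂ * (ℓ : ℝ) ^ (-ν)) :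
    ∃ ε₀ : ℝ, 0 < ε₀ ∧ ε₀ ≤ Real.exp (-1) ∧
      ∀ ε : ℝ, 0 < ε → ε < ε₀ →
        ∀ Y : ℕ → ℝ, (∀ ℓ : ℕ, 1 ≤ ℓ → ℓ ≤ Md K α ε → |Y ℓ - K ℓ| ≤ |K ℓ| / 2) →
          Mstop Y α ε ≤ Md K α ε :=
  M_le_Md_general α ν c₁ c₂ hα hν K hK
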